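/- arXiv:1604.07916 — 2 statements merged into one kernel-verified Lean document; each statement's English description precedes it below -/
import Mathlib

section
/- Let b ∈ ℝ^N be a vector with all entries nonzero, and let B₀ = b bᵀ be its rank-one Gram matrix (entries (B₀)_{ij} = b_i b_j). Let Λ_k = diag(1/(γ_k − λ_i))_{1≤i≤N} for k = 1,...,N, where λ_1 < ... < λ_N < γ_1 < ... < γ_N are reals, and set B_k = Λ_k B₀ Λ_k. Then each B_k is symmetric positive semidefinite and the sum B_1 + B_2 + ... + B_N is symmetric positive definite, hence invertible. -/
/-!
Each `B_k = Λ_k b bᵀ Λ_k` is the rank-one matrix `v_k v_kᵀ` with `v_k = Λ_k b`, so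
`∑ B_k = Vᵀ V` where `V = C · diag b` has rows `v_k` and `C = (1 / (γ_k - λ_i))` is a Cauchy matrix.
Hence the sum is positive definite as soon as `V` has trivial kernel. For `C`, a vector `y` with
`C y = 0` rescaled by the nodal weights at the `λ_i` is the value vector of a Lagrange interpolant
of degree `< N` that, by the barycentric formula, vanishes at the `N` distinct points `γ_k`;
so the interpolant is zero and so is `y`.
-/

open Matrix Polynomial Lagrange

section Cauchy

variable {K ι κ : Type*} [Field K] [Fintype ι] [Fintype κ]

def cauchyMatrix (lam : ι → K) (gam : κ → K) : Matrix κ ι K :=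
  of fun k i => (gam k - lam i)⁻¹

theorem cauchyMatrix_mulVec_injective {lam : ι → K} {gam : κ → K}
    (hlam : Function.Injective lam) (hgam : Function.Injective gam)
    (hne : ∀ i k, gam k ≠ lam i) (hcard : Fintype.card ι ≤ Fintype.card κ) :
    Function.Injective (cauchyMatrix lam gam).mulVec := by
  classical
  suffices h : ∀ y, cauchyMatrix lam gam *ᵥ y = 0 → y = 0 from fun x y hxy =>
    sub_eq_zero.1 <| h _ <| by rw [mulVec_sub, hxy, sub_self]
  intro y hy
  have hw : ∀ i, nodalWeight Finset.univ lam i ≠ 0 := fun i =>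
    nodalWeight_ne_zero hlam.injOn (Finset.mem_univ i)
  set p := interpolate Finset.univ lam fun i => y i / nodalWeight Finset.univ lam i
  have hp_gam : ∀ k, p.eval (gam k) = 0 := fun k => by
    rw [eval_interpolate_not_at_node _ fun i _ => hne i k]
    have hyk : ∑ i, (gam k - lam i)⁻¹ * y i = 0 := congrFun hy k
    convert mul_zero _ using 2
    rw [← hyk]
    refine Finset.sum_congr rfl fun i _ => ?_
    field_simp [hw i]
  have hp : p = 0 := by
    refine eq_zero_of_degree_lt_of_eval_index_eq_zero Finset.univ hgam.injOn ?_
      fun k _ => hp_gam k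
    exact (degree_interpolate_lt _ hlam.injOn).trans_le (by exact_mod_cast hcard)
  funext i
  have hp_lam : p.eval (lam i) = y i / nodalWeight Finset.univ lam i :=
    eval_interpolate_at_node _ hlam.injOn (Finset.mem_univ i)
  rw [hp, eval_zero, eq_comm, div_eq_zero_iff] at hp_lam
  exact hp_lam.resolve_right (hw i)

end Cauchy

theorem diagonal_mul_vecMulVec_mul_diagonal {n R : Type*} [Fintype n] [DecidableEq n]
    [CommSemiring R] (d e a c : n → R) :
    diagonal d * vecMulVec a c * diagonal e = vecMulVec (d * a) (e * c) := by
  ext i j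
  simp only [mul_diagonal, diagonal_mul, vecMulVec_apply, Pi.mul_apply]
  ring

theorem transpose_mul_eq_sum_vecMulVec {m n κ R : Type*} [Fintype κ]
    [NonUnitalNonAssocSemiring R] (A : Matrix κ m R) (B : Matrix κ n R) :
    Aᵀ * B = ∑ k, vecMulVec (A k) (B k) := by
  ext i j
  simp only [mul_apply, transpose_apply, Matrix.sum_apply, vecMulVec_apply]

/-- With `b ∈ ℝ^N` having all entries nonzero, `B₀ = b bᵀ`,
`Λ_k = diag (1/(γ_k - λ_i))` and `B_k = Λ_k B₀ Λ_k`, where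
`λ₁ < ... < λ_N < γ₁ < ... < γ_N`, each `B_k` is positive semidefinite and
`B₁ + ... + B_N` is positive definite, hence invertible. -/
theorem sum_Bk_posDef (N : ℕ) (lam gam : Fin N → ℝ) (b : Fin N → ℝ)
    (hlam : StrictMono lam) (hgam : StrictMono gam)
    (hsep : ∀ i k : Fin N, lam i < gam k)
    (hb : ∀ i, b i ≠ 0) :
    (∀ k : Fin N,
      ((Matrix.diagonal fun i => 1 / (gam k - lam i)) * Matrix.vecMulVec b b *
        (Matrix.diagonal fun i => 1 / (gam k - lam i))).PosSemidef) ∧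
    (∑ k : Fin N,
      (Matrix.diagonal fun i => 1 / (gam k - lam i)) * Matrix.vecMulVec b b *
        (Matrix.diagonal fun i => 1 / (gam k - lam i))).PosDef ∧
    IsUnit (∑ k : Fin N,
      (Matrix.diagonal fun i => 1 / (gam k - lam i)) * Matrix.vecMulVec b b *
        (Matrix.diagonal fun i => 1 / (gam k - lam i))) := by
  set V := cauchyMatrix lam gam * diagonal b
  have hBk : ∀ k, (diagonal fun i => 1 / (gam k - lam i)) * vecMulVec b b *
      (diagonal fun i => 1 / (gam k - lam i)) = vecMulVec (V k) (V k) := fun k => by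
    rw [diagonal_mul_vecMulVec_mul_diagonal]
    congr 1 <;> ext i <;> simp [V, cauchyMatrix, mul_diagonal, mul_comm]
  have hV : Function.Injective V.mulVec := by
    have hC := cauchyMatrix_mulVec_injective hlam.injective hgam.injective
      (fun i k => (hsep i k).ne') le_rfl
    have hD : Function.Injective (diagonal b).mulVec := mulVec_injective_iff_isUnit.2 <|
      isUnit_diagonal.2 <| Pi.isUnit_iff.2 fun i => (hb i).isUnit
    simpa only [V, Function.comp_def, mulVec_mulVec] using hC.comp hD
  have hsum : ∑ k, (diagonal fun i => 1 / (gam k - lam i)) * vecMulVec b b *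
      (diagonal fun i => 1 / (gam k - lam i)) = Vᴴ * V := by
    rw [conjTranspose_eq_transpose_of_trivial, transpose_mul_eq_sum_vecMulVec]
    exact Finset.sum_congr rfl fun k _ => hBk k
  have hPD : (Vᴴ * V).PosDef := PosDef.conjTranspose_mul_self V hV
  refine ⟨fun k => ?_, hsum ▸ hPD, hsum ▸ hPD.isUnit⟩
  simpa only [hBk, star_trivial] using posSemidef_vecMulVec_self_star (V k)
end

section
/- Let B be a symmetric positive definite N×N real matrix and let B_2, ..., B_N be symmetric positive semidefinite matrices. Suppose v : [0,∞) → ℝ^N is differentiable and satisfies the ODE v'(t) = −γ_1 v(t) + Σ_{k=2}^N (γ_1 − γ_k) B_k B v(t) where γ_1 < γ_2 < ... < γ_N. Then the function t ↦ |B^{1/2} v(t)|² satisfies d/dt |B^{1/2} v(t)|² ≤ −2γ_1 |B^{1/2} v(t)|², and consequently |B^{1/2} v(t)| ≤ e^{−γ_1 t} |B^{1/2} v(0)| for all t ≥ 0. -/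
open Matrix Real

/-! `|B^{1/2} v|²` is a Lyapunov function: writing `B = S²` with `S` symmetric, each
coupling term contributes `(γ₁ - γ_k) ⟨S v, (S B_k S)(S v)⟩ ≤ 0` to its derivative, since
`S B_k S` is positive semidefinite and `γ₁ < γ_k`. The differential inequality `g' ≤ -2γ₁ g` then integrates to
`g t ≤ e^{-2γ₁ t} g 0`, because `e^{2γ₁ t} g t` is antitone. -/

section Calculus

variable {n : Type*} [Fintype n]

theorem HasDerivAt.matrix_mulVec {w : ℝ → n → ℝ} {w' : n → ℝ} {t : ℝ}
    (hw : HasDerivAt w w' t) (M : Matrix n n ℝ) :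
    HasDerivAt (fun s => M *ᵥ w s) (M *ᵥ w') t :=
  (Matrix.mulVecLin M).toContinuousLinearMap.hasFDerivAt.comp_hasDerivAt t hw

theorem HasDerivAt.dotProduct {u w : ℝ → n → ℝ} {u' w' : n → ℝ} {t : ℝ}
    (hu : HasDerivAt u u' t) (hw : HasDerivAt w w' t) :
    HasDerivAt (fun s => u s ⬝ᵥ w s) (u' ⬝ᵥ w t + u t ⬝ᵥ w') t := by
  simp only [_root_.dotProduct, ← Finset.sum_add_distrib]
  exact HasDerivAt.fun_sum fun i _ => (hasDerivAt_pi.mp hu i).mul (hasDerivAt_pi.mp hw i)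

theorem le_exp_mul_mul_of_hasDerivAt_le_mul {g g' : ℝ → ℝ} {c : ℝ}
    (hg : ∀ t, HasDerivAt g (g' t) t) (hle : ∀ t, g' t ≤ c * g t) {t : ℝ} (ht : 0 ≤ t) :
    g t ≤ exp (c * t) * g 0 := by
  have hf : ∀ s, HasDerivAt (fun s => exp (-c * s) * g s)
      (exp (-c * s) * (g' s - c * g s)) s := fun s => by
    have he : HasDerivAt (fun s => exp (-c * s)) (exp (-c * s) * -c) s := by
      simpa using ((hasDerivAt_id s).const_mul (-c)).exp
    exact (he.fun_mul (hg s)).congr_deriv (by ring)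
  have hanti : Antitone fun s => exp (-c * s) * g s :=
    antitone_of_deriv_nonpos (fun s => (hf s).differentiableAt) fun s => by
      rw [(hf s).deriv]
      exact mul_nonpos_of_nonneg_of_nonpos (exp_nonneg _) (sub_nonpos.mpr (hle s))
  calc g t = exp (c * t) * (exp (-c * t) * g t) := by
        rw [← mul_assoc, ← exp_add, neg_mul, add_neg_cancel, exp_zero, one_mul]
    _ ≤ exp (c * t) * g 0 := by
        gcongr
        simpa using hanti ht

end Calculus

theorem dotProduct_mulVec_add_sum_le {n ι : Type*} [Fintype n] {S : Matrix n n ℝ}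
    (hS : S.IsHermitian) {s : Finset ι} {M : ι → Matrix n n ℝ} {c : ι → ℝ}
    (hM : ∀ k ∈ s, (M k).PosSemidef) (hc : ∀ k ∈ s, c k ≤ 0) (γ : ℝ) (v : n → ℝ) :
    (S *ᵥ v) ⬝ᵥ (S *ᵥ (-γ • v + ∑ k ∈ s, c k • ((M k * (S * S)) *ᵥ v))) ≤
      -γ * ((S *ᵥ v) ⬝ᵥ (S *ᵥ v)) := by
  have hterm : ∀ k ∈ s, 0 ≤ (S *ᵥ v) ⬝ᵥ (S *ᵥ ((M k * (S * S)) *ᵥ v)) := by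
    intro k hk
    have hpsd : (S * M k * S).PosSemidef := by
      simpa only [hS.eq] using (hM k hk).mul_mul_conjTranspose_same S
    rw [mulVec_mulVec, ← Matrix.mul_assoc, ← Matrix.mul_assoc, ← mulVec_mulVec]
    simpa using hpsd.dotProduct_mulVec_nonneg (S *ᵥ v)
  rw [mulVec_add, mulVec_smul, mulVec_sum, dotProduct_add, dotProduct_smul, dotProduct_sum,
    smul_eq_mul, add_le_iff_nonpos_right]
  refine Finset.sum_nonpos fun k hk => ?_
  rw [mulVec_smul, dotProduct_smul, smul_eq_mul]
  exact mul_nonpos_of_nonpos_of_nonneg (hc k hk) (hterm k hk)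

theorem lyapunov_decay_finite_dim_general (N : ℕ) (hN : 0 < N)
    (B B12 : Matrix (Fin N) (Fin N) ℝ) (Bk : Fin N → Matrix (Fin N) (Fin N) ℝ)
    (gam : Fin N → ℝ) (hgam : StrictMono gam)
    (hB12 : B12.PosDef) (hB12sq : B12 * B12 = B)
    (hBk : ∀ k : Fin N, k ≠ ⟨0, hN⟩ → (Bk k).PosSemidef)
    (v : ℝ → Fin N → ℝ)
    (hv : ∀ t : ℝ, HasDerivAt v
      (-gam ⟨0, hN⟩ • v t +
        (∑ k ∈ Finset.univ.erase ⟨0, hN⟩,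
          (gam ⟨0, hN⟩ - gam k) • ((Bk k * B) *ᵥ v t))) t) :
    (∀ t : ℝ, 0 ≤ t →
      deriv (fun s => dotProduct (B12 *ᵥ v s) (B12 *ᵥ v s)) t ≤
        -2 * gam ⟨0, hN⟩ * dotProduct (B12 *ᵥ v t) (B12 *ᵥ v t)) ∧
    (∀ t : ℝ, 0 ≤ t →
      Real.sqrt (dotProduct (B12 *ᵥ v t) (B12 *ᵥ v t)) ≤
        Real.exp (-gam ⟨0, hN⟩ * t) * Real.sqrt (dotProduct (B12 *ᵥ v 0) (B12 *ᵥ v 0))) := by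
  subst hB12sq
  set g := fun s => (B12 *ᵥ v s) ⬝ᵥ (B12 *ᵥ v s)
  have hg : ∀ t, HasDerivAt g (2 * ((B12 *ᵥ v t) ⬝ᵥ (B12 *ᵥ deriv v t))) t := fun t => by
    have hw := (hv t).differentiableAt.hasDerivAt.matrix_mulVec B12
    simpa [two_mul, dotProduct_comm (B12 *ᵥ deriv v t)] using hw.dotProduct hw
  have hle : ∀ t, 2 * ((B12 *ᵥ v t) ⬝ᵥ (B12 *ᵥ deriv v t)) ≤ -2 * gam ⟨0, hN⟩ * g t := by
    intro t
    have := dotProduct_mulVec_add_sum_le hB12.isHermitian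
      (s := Finset.univ.erase ⟨0, hN⟩) (M := Bk) (c := fun k => gam ⟨0, hN⟩ - gam k)
      (fun k hk => hBk k (Finset.ne_of_mem_erase hk))
      (fun k _ => sub_nonpos.mpr (hgam.monotone (Fin.le_def.mpr (Nat.zero_le k.val))))
      (gam ⟨0, hN⟩) (v t)
    rw [(hv t).deriv]
    linarith
  refine ⟨fun t _ => (hg t).deriv ▸ hle t, fun t ht => ?_⟩
  calc √(g t) ≤ √(exp (-2 * gam ⟨0, hN⟩ * t) * g 0) :=
        sqrt_le_sqrt (le_exp_mul_mul_of_hasDerivAt_le_mul hg hle ht)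
    _ = exp (-gam ⟨0, hN⟩ * t) * √(g 0) := by
        rw [sqrt_mul (exp_nonneg _), ← exp_half]
        ring_nf

/-- If `B` is symmetric positive definite with square root `B12`, `B_k` are symmetric
positive semidefinite for `k ≥ 2` (here indices `k ≠ 0`), `γ₁ < ... < γ_N`, and
`v' = -γ₁ v + ∑_{k≥2} (γ₁ - γ_k) B_k B v`, then `g t = |B^{1/2} v t|²` satisfies
`g' ≤ -2 γ₁ g` and `|B^{1/2} v t| ≤ e^{-γ₁ t} |B^{1/2} v 0|` for `t ≥ 0`. -/
theorem lyapunov_decay_finite_dim (N : ℕ) (hN : 0 < N)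
    (B B12 : Matrix (Fin N) (Fin N) ℝ) (Bk : Fin N → Matrix (Fin N) (Fin N) ℝ)
    (gam : Fin N → ℝ) (hgam : StrictMono gam)
    (hB : B.PosDef) (hB12 : B12.PosDef) (hB12sq : B12 * B12 = B)
    (hBk : ∀ k : Fin N, k ≠ ⟨0, hN⟩ → (Bk k).PosSemidef)
    (v : ℝ → Fin N → ℝ)
    (hv : ∀ t : ℝ, HasDerivAt v
      (-gam ⟨0, hN⟩ • v t +
        (∑ k ∈ Finset.univ.erase ⟨0, hN⟩,
          (gam ⟨0, hN⟩ - gam k) • ((Bk k * B) *ᵥ v t))) t) :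
    (∀ t : ℝ, 0 ≤ t →
      deriv (fun s => dotProduct (B12 *ᵥ v s) (B12 *ᵥ v s)) t ≤
        -2 * gam ⟨0, hN⟩ * dotProduct (B12 *ᵥ v t) (B12 *ᵥ v t)) ∧
    (∀ t : ℝ, 0 ≤ t →
      Real.sqrt (dotProduct (B12 *ᵥ v t) (B12 *ᵥ v t)) ≤
        Real.exp (-gam ⟨0, hN⟩ * t) * Real.sqrt (dotProduct (B12 *ᵥ v 0) (B12 *ᵥ v 0))) :=
  lyapunov_decay_finite_dim_general N hN B B12 Bk gam hgam hB12 hB12sq hBk v hv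
end
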